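/- In the regular heptagon K = conv{k_i : i = 0,…,6} with k_i = Rot_{2πi/7}(1,0), the segment from p₁ = k₀ to p₄ = ½(k₃ + k₄) is an affine diameter of K (no parallel chord is longer), and its length is 1 + cos(π/7). -/

import Mathlib

open Real

/-- The vertices of the regular heptagon: `k i = Rot_{2πi/7}(1, 0)`. -/
noncomputable def heptVtx (i : ℕ) : EuclideanSpace ℝ (Fin 2) :=
  (WithLp.equiv 2 (Fin 2 → ℝ)).symm ![Real.cos (2 * π * i / 7), Real.sin (2 * π * i / 7)]

/-- The regular heptagon. -/
noncomputable def heptagon : Set (EuclideanSpace ℝ (Fin 2)) :=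
  convexHull ℝ
    {heptVtx 0, heptVtx 1, heptVtx 2, heptVtx 3, heptVtx 4, heptVtx 5, heptVtx 6}

/-!
The vector `½(k₃ + k₄) - k₀` is horizontal, equal to `(-(1 + cos(π/7)), 0)`, while every vertex,
hence all of `K`, lies in the vertical strip `-cos(π/7) ≤ x ≤ 1`, whose width is exactly the
length of that vector. A chord parallel to it spans at most the width of the strip in the
`x`-direction, so it is no longer.
-/

theorem norm_sub_le_of_sub_eq_smul_of_mem_Icc {E : Type*} [SeminormedAddCommGroup E]
    [NormedSpace ℝ E] (f : E →ₗ[ℝ] ℝ) {a b v : E} {t m M : ℝ} (ha : f a ∈ Set.Icc m M)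
    (hb : f b ∈ Set.Icc m M) (hv : M - m ≤ |f v|) (hv₀ : f v ≠ 0) (hab : b - a = t • v) :
    ‖b - a‖ ≤ ‖v‖ := by
  have ht : |t| * |f v| ≤ 1 * |f v| :=
    calc |t| * |f v| = |f b - f a| := by rw [← abs_mul, ← smul_eq_mul, ← map_smul, ← hab, map_sub]
      _ ≤ M - m := abs_sub_le_of_le_of_le hb.1 hb.2 ha.1 ha.2
      _ ≤ 1 * |f v| := by rwa [one_mul]
  rw [hab, norm_smul, Real.norm_eq_abs]
  exact mul_le_of_le_one_left (norm_nonneg v) (le_of_mul_le_mul_right ht (abs_pos.2 hv₀))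

theorem neg_cos_le_cos_of_le_abs_sub_pi {x δ : ℝ} (hδ : 0 ≤ δ) (hx₀ : 0 ≤ x) (hx : x ≤ 2 * π)
    (h : δ ≤ |x - π|) : -cos δ ≤ cos x := by
  have hcos : cos x = -cos |x - π| := by rw [cos_abs, cos_sub_pi, neg_neg]
  rw [hcos, neg_le_neg_iff]
  exact cos_le_cos_of_nonneg_of_le_pi hδ (abs_le.2 ⟨by linarith, by linarith⟩) h

theorem neg_cos_pi_div_seven_le_heptVtx_apply_zero {i : ℕ} (hi : i ≤ 7) :
    -cos (π / 7) ≤ heptVtx i 0 := by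
  have hodd : (1 : ℝ) ≤ |2 * (i : ℝ) - 7| := by
    have : (1 : ℤ) ≤ |2 * (i : ℤ) - 7| := Int.one_le_abs (by omega)
    exact_mod_cast this
  refine neg_cos_le_cos_of_le_abs_sub_pi (by positivity) (by positivity) ?_ ?_
  · have : (i : ℝ) ≤ 7 := by exact_mod_cast hi
    nlinarith [pi_pos]
  · rw [show 2 * π * i / 7 - π = (2 * i - 7) * (π / 7) by ring, abs_mul,
      abs_of_pos (by positivity : 0 < π / 7)]
    exact le_mul_of_one_le_left (by positivity) hodd

theorem heptagon_subset_preimage_Icc :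
    heptagon ⊆ EuclideanSpace.proj (0 : Fin 2) ⁻¹' Set.Icc (-cos (π / 7)) 1 := by
  refine convexHull_min ?_ ((convex_Icc _ _).linear_preimage (EuclideanSpace.proj 0).toLinearMap)
  intro x hx
  rcases hx with rfl | rfl | rfl | rfl | rfl | rfl | rfl
  all_goals exact ⟨neg_cos_pi_div_seven_le_heptVtx_apply_zero (by norm_num), cos_le_one _⟩

theorem heptVtx_zero : heptVtx 0 = !₂[1, 0] := by
  ext i; fin_cases i <;> simp [heptVtx]

theorem heptVtx_three : heptVtx 3 = !₂[-cos (π / 7), sin (π / 7)] := by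
  have h : 2 * π * 3 / 7 = π - π / 7 := by ring
  ext i; fin_cases i <;> simp [heptVtx, h, cos_pi_sub, sin_pi_sub]

theorem heptVtx_four : heptVtx 4 = !₂[-cos (π / 7), -sin (π / 7)] := by
  have h : 2 * π * 4 / 7 = π / 7 + π := by ring
  ext i; fin_cases i <;> simp [heptVtx, h, cos_add_pi, sin_add_pi]

theorem midpoint_heptVtx_three_four_sub_heptVtx_zero :
    (1 / 2 : ℝ) • (heptVtx 3 + heptVtx 4) - heptVtx 0 = !₂[-(1 + cos (π / 7)), 0] := by
  rw [heptVtx_zero, heptVtx_three, heptVtx_four]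
  ext i; fin_cases i <;> simp; ring

theorem EuclideanSpace.norm_vec₂_zero_right (x : ℝ) : ‖!₂[x, 0]‖ = |x| := by
  simp [EuclideanSpace.norm_eq, sqrt_sq_eq_abs]

/-- In the regular heptagon, the segment from `p₁ = k₀` to `p₄ = ½(k₃ + k₄)` is an affine
diameter (no parallel chord is longer), and its length is `1 + cos(π/7)`. -/
theorem heptagon_affine_diameter :
    (∀ a ∈ heptagon, ∀ b ∈ heptagon,
      (∃ t : ℝ, b - a = t • ((1 / 2 : ℝ) • (heptVtx 3 + heptVtx 4) - heptVtx 0)) →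
      ‖b - a‖ ≤ ‖(1 / 2 : ℝ) • (heptVtx 3 + heptVtx 4) - heptVtx 0‖) ∧
    ‖(1 / 2 : ℝ) • (heptVtx 3 + heptVtx 4) - heptVtx 0‖ = 1 + Real.cos (π / 7) := by
  have hc : 0 < 1 + cos (π / 7) :=
    add_pos one_pos (cos_pos_of_mem_Ioo ⟨by linarith [pi_pos], by linarith [pi_pos]⟩)
  have hproj : EuclideanSpace.proj (0 : Fin 2) !₂[-(1 + cos (π / 7)), 0] = -(1 + cos (π / 7)) :=
    rfl
  have hnorm : ‖!₂[-(1 + cos (π / 7)), 0]‖ = 1 + cos (π / 7) := by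
    rw [EuclideanSpace.norm_vec₂_zero_right, abs_neg, abs_of_pos hc]
  rw [midpoint_heptVtx_three_four_sub_heptVtx_zero]
  refine ⟨fun a ha b hb ⟨t, hab⟩ => ?_, hnorm⟩
  refine norm_sub_le_of_sub_eq_smul_of_mem_Icc (EuclideanSpace.proj 0).toLinearMap
    (heptagon_subset_preimage_Icc ha) (heptagon_subset_preimage_Icc hb) ?_ ?_ hab
  · simp only [ContinuousLinearMap.coe_coe, hproj, abs_neg, abs_of_pos hc, sub_neg_eq_add, le_refl]
  · simpa only [ContinuousLinearMap.coe_coe, hproj, neg_ne_zero] using hc.ne'
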